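/- Let B be an r×n binary matrix and let I be a set of column indices such that, in the bipartite graph whose left vertices are the columns of I, whose right vertices are the rows of B, and whose edges are the positions (i,j) with j ∈ I and B(i,j) = 1, there is no matching saturating all columns of I. Then there exists a nonempty subset V ⊆ I with a(V) < |V|; hence I contains a nonempty stopping set J with a(J) < |J|, and for every field F and every F-labeling H of B, the submatrix H_I of H consisting of the columns indexed by I satisfies rank(H_I) < |I|. -/

import Mathlib

/-!
By Hall's theorem, the absence of a matching saturating `I` yields `V ⊆ I` with fewer active rows
than columns. Peeling off, one at a time, the unique neighbour of a row of degree one keeps this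
deficiency and ends in a stopping set. Finally, the columns of any labeling `H` indexed by `V` are
supported on the `a(V) < |V|` active rows, so they are dependent and `H_I` cannot have full
column rank.
-/

open Classical in
noncomputable def activeCard {r n : ℕ} (B : Matrix (Fin r) (Fin n) Bool) (J : Finset (Fin n)) : ℕ :=
  (Finset.univ.filter fun i : Fin r => ∃ j ∈ J, B i j = true).card

theorem Matrix.rank_lt_card_width_of_submatrix {F m n n₀ : Type*} [Field F] [Fintype m]
    [Fintype n] [Fintype n₀] (A : Matrix m n F) {c : n₀ → n} (hc : Function.Injective c)
    (h : (A.submatrix id c).rank < Fintype.card n₀) : A.rank < Fintype.card n := by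
  refine A.rank_le_card_width.lt_of_ne fun hA => h.ne ?_
  have hcols : LinearIndependent F A.col := by
    rw [linearIndependent_iff_card_eq_finrank_span, Set.finrank, ← rank_eq_finrank_span_cols, hA]
  rw [← rank_transpose]
  exact LinearIndependent.rank_matrix (hcols.comp c hc)

section TannerGraph

variable {r n : ℕ} (B : Matrix (Fin r) (Fin n) Bool)

def IsStoppingSet (J : Finset (Fin n)) : Prop :=
  ∀ i : Fin r, (J.filter fun j => B i j = true).card ≠ 1

variable {B}

theorem nonempty_of_activeCard_lt {V : Finset (Fin n)} (h : activeCard B V < V.card) :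
    V.Nonempty :=
  Finset.card_pos.mp (Nat.zero_lt_of_lt h)

theorem activeCard_eq_card_biUnion (V : Finset (Fin n)) :
    activeCard B V = (V.biUnion fun j => Finset.univ.filter fun i => B i j = true).card := by
  unfold activeCard
  congr 1
  ext i
  simp

theorem exists_activeCard_lt_of_not_exists_matching {I : Finset (Fin n)}
    (h : ¬ ∃ f : {j : Fin n // j ∈ I} → Fin r,
      Function.Injective f ∧ ∀ j : {j : Fin n // j ∈ I}, B (f j) j.1 = true) :
    ∃ V ⊆ I, activeCard B V < V.card := by
  by_contra! hall
  refine h ?_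
  obtain ⟨f, hf, hfB⟩ := (Finset.all_card_le_biUnion_card_iff_exists_injective
    fun j : {j : Fin n // j ∈ I} => Finset.univ.filter fun i => B i j.1 = true).mp fun s => by
      have := hall (s.image Subtype.val) (by simp [Finset.image_subset_iff])
      rwa [activeCard_eq_card_biUnion, Finset.image_biUnion,
        Finset.card_image_of_injective _ Subtype.val_injective] at this
  exact ⟨f, hf, fun j => (Finset.mem_filter.mp (hfB j)).2⟩

theorem activeCard_erase_lt {V : Finset (Fin n)} {i : Fin r} {j : Fin n}
    (hi : (V.filter fun j => B i j = true) = {j}) :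
    activeCard B (V.erase j) < activeCard B V := by
  have hj : j ∈ V.filter fun j => B i j = true := hi ▸ Finset.mem_singleton_self j
  unfold activeCard
  refine Finset.card_lt_card ((Finset.ssubset_iff_of_subset ?_).mpr ⟨i, ?_, ?_⟩)
  · intro i'
    simp only [Finset.mem_filter, Finset.mem_univ, true_and]
    exact fun ⟨j', hj', hB⟩ => ⟨j', Finset.mem_of_mem_erase hj', hB⟩
  · simp only [Finset.mem_filter, Finset.mem_univ, true_and] at hj ⊢
    exact ⟨j, hj⟩
  · simp only [Finset.mem_filter, Finset.mem_univ, true_and, Finset.mem_erase, not_exists,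
      not_and]
    rintro j' ⟨hne, hj'⟩ hB
    exact hne (Finset.mem_singleton.mp (hi ▸ Finset.mem_filter.mpr ⟨hj', hB⟩))

theorem exists_isStoppingSet_subset_of_activeCard_lt {V : Finset (Fin n)}
    (h : activeCard B V < V.card) : ∃ J ⊆ V, IsStoppingSet B J ∧ activeCard B J < J.card := by
  induction V using Finset.strongInduction with
  | H V ih =>
    by_cases hstop : IsStoppingSet B V
    · exact ⟨V, subset_rfl, hstop, h⟩
    obtain ⟨i, hi⟩ := not_forall_not.mp hstop
    obtain ⟨j, hj⟩ := Finset.card_eq_one.mp hi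
    have hjV : j ∈ V := (Finset.mem_filter.mp (hj ▸ Finset.mem_singleton_self j)).1
    have hlt : activeCard B (V.erase j) < (V.erase j).card := by
      have := activeCard_erase_lt hj
      rw [Finset.card_erase_of_mem hjV]
      omega
    obtain ⟨J, hJ, hJstop, hJlt⟩ := ih _ (Finset.erase_ssubset hjV) hlt
    exact ⟨J, hJ.trans (Finset.erase_subset j V), hJstop, hJlt⟩

theorem rank_submatrix_le_activeCard {R : Type*} [CommSemiring R] [StrongRankCondition R]
    {H : Matrix (Fin r) (Fin n) R} (hH : ∀ i j, H i j ≠ 0 → B i j = true) (V : Finset (Fin n)) :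
    (H.submatrix id fun j : {j : Fin n // j ∈ V} => j.1).rank ≤ activeCard B V := by
  refine Matrix.rank_le_card_of_support_subset _ _ fun i hi => ?_
  obtain ⟨j, hj⟩ := Function.ne_iff.mp hi
  simp only [Finset.coe_filter, Finset.mem_univ, true_and, Set.mem_ofPred_eq]
  exact ⟨j.1, j.2, hH i j hj⟩

end TannerGraph

/-- If in the bipartite (Tanner) graph between the columns of `I`
and the rows of `B` there is no matching saturating `I`, then some nonempty
`V ⊆ I` has fewer active rows than columns; hence `I` contains a nonempty
stopping set `J` with `a(J) < |J|`, and for every field `F` and every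
`F`-labeling `H` of `B` the column submatrix `H_I` has rank less than `|I|`. -/
theorem no_matching_deficient_and_rank_deficient {r n : ℕ}
    (B : Matrix (Fin r) (Fin n) Bool) (I : Finset (Fin n))
    (hnomatch : ¬ ∃ f : {j : Fin n // j ∈ I} → Fin r,
      Function.Injective f ∧ ∀ j : {j : Fin n // j ∈ I}, B (f j) j.1 = true) :
    (∃ V ⊆ I, V.Nonempty ∧ activeCard B V < V.card) ∧
    (∃ J ⊆ I, J.Nonempty ∧
      (∀ i : Fin r, (J.filter fun j => B i j = true).card ≠ 1) ∧
      activeCard B J < J.card) ∧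
    (∀ (F : Type) [Field F] (H : Matrix (Fin r) (Fin n) F),
      (∀ i j, H i j ≠ 0 ↔ B i j = true) →
      (H.submatrix id (fun j : {j : Fin n // j ∈ I} => j.1)).rank < I.card) := by
  obtain ⟨V, hVI, hV⟩ := exists_activeCard_lt_of_not_exists_matching hnomatch
  obtain ⟨J, hJV, hJstop, hJ⟩ := exists_isStoppingSet_subset_of_activeCard_lt hV
  refine ⟨⟨V, hVI, nonempty_of_activeCard_lt hV, hV⟩,
    ⟨J, hJV.trans hVI, nonempty_of_activeCard_lt hJ, hJstop, hJ⟩, fun F _ H hH => ?_⟩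
  have hrankV := (rank_submatrix_le_activeCard (fun i j => (hH i j).mp) V).trans_lt hV
  rw [← Fintype.card_coe V] at hrankV
  rw [← Fintype.card_coe I]
  exact Matrix.rank_lt_card_width_of_submatrix _
    (c := fun j : {j : Fin n // j ∈ V} => ⟨j.1, hVI j.2⟩)
    (fun _ _ hab => Subtype.ext (Subtype.mk.inj hab)) hrankV
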